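/- Let γ : ℝ → EuclideanSpace ℝ (Fin 3) be a smooth unit-speed curve, closed with period ℓ > 0, with nowhere-vanishing curvature κ(t) = ‖γ''(t)‖ > 0. Suppose N : ℝ → EuclideanSpace ℝ (Fin 3) is a smooth map with N(t + ℓ) = N(t), ‖N(t)‖ = 1, ⟨N(t), γ'(t)⟩ = 0 for all t, such that N'(t) is a scalar multiple of γ'(t) for every t, and suppose moreover that the normal curvature is positive: ⟨γ''(t), N(t)⟩ > 0 for all t (convexity of the surface along γ). Then the total torsion vanishes: ∫₀^ℓ τ(t) dt = 0, where τ(t) = ⟨γ'(t) ×₃ γ''(t), γ'''(t)⟩ / ‖γ''(t)‖². -/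

import Mathlib

open scoped RealInnerProductSpace

/-- The torsion of a unit-speed curve in `ℝ³` with nowhere-vanishing curvature:
`τ(t) = ⟨γ'(t) ×₃ γ''(t), γ'''(t)⟩ / ‖γ''(t)‖²`. -/
noncomputable def torsion3 (γ : ℝ → EuclideanSpace ℝ (Fin 3)) (t : ℝ) : ℝ :=
  (inner ℝ ((WithLp.equiv 2 (Fin 3 → ℝ)).symm
      (crossProduct (WithLp.equiv 2 (Fin 3 → ℝ) (deriv γ t))
        (WithLp.equiv 2 (Fin 3 → ℝ) (deriv (deriv γ) t))))
    (deriv (deriv (deriv γ)) t) : ℝ) / ‖deriv (deriv γ) t‖ ^ 2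

/-!
Along `γ` use the Darboux frame `T = γ'`, `N`, `T ×₃ N`. As `γ'' ⊥ T`, we have
`γ'' = κₙ N + κ_g (T ×₃ N)`, hence `‖γ''‖² = κₙ² + κ_g²` and `T ×₃ γ'' = κₙ (T ×₃ N) - κ_g N`.
On a line of curvature `N' ∥ T`, which gives `κₙ' = ⟨γ''', N⟩` and `κ_g' = ⟨γ''', T ×₃ N⟩`.
So `τ = (κₙ κ_g' - κ_g κₙ') / (κₙ² + κ_g²)`, which on a convex surface (`κₙ > 0`) is the
derivative of the periodic function `arctan (κ_g / κₙ)`; its integral over a period vanishes.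
-/

open Real Function WithLp
open scoped ContDiff

local notation "ℝ³" => EuclideanSpace ℝ (Fin 3)

theorem Function.Periodic.deriv {𝕜 F : Type*} [NontriviallyNormedField 𝕜] [NormedAddCommGroup F]
    [NormedSpace 𝕜 F] {f : 𝕜 → F} {c : 𝕜} (hf : Periodic f c) : Periodic (deriv f) c :=
  fun x => by rw [← deriv_comp_add_const, hf.funext]

theorem Function.Periodic.intervalIntegral_eq_zero_of_hasDerivAt {E : Type*}
    [NormedAddCommGroup E] [NormedSpace ℝ E] [CompleteSpace E] {f f' : ℝ → E} {c : ℝ}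
    (hf : Periodic f c) (a : ℝ) (hderiv : ∀ t, HasDerivAt f (f' t) t)
    (hint : IntervalIntegrable f' MeasureTheory.volume a (a + c)) :
    ∫ t in a..a + c, f' t = 0 := by
  rw [intervalIntegral.integral_eq_sub_of_hasDerivAt (fun t _ => hderiv t) hint, hf a, sub_self]

theorem HasDerivAt.arctan_div {f g : ℝ → ℝ} {f' g' x : ℝ} (hf : HasDerivAt f f' x)
    (hg : HasDerivAt g g' x) (hx : f x ≠ 0) :
    HasDerivAt (fun t => Real.arctan (g t / f t))
      ((f x * g' - g x * f') / (f x ^ 2 + g x ^ 2)) x := by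
  refine (hg.div hf hx).arctan.congr_deriv ?_
  simp only [Pi.div_apply]
  field_simp

theorem inner_eq_zero_of_hasDerivAt_of_norm_eq {F : Type*} [NormedAddCommGroup F]
    [InnerProductSpace ℝ F] {u : ℝ → F} {u' : F} {t c : ℝ} (hu : HasDerivAt u u' t)
    (hc : ∀ s, ‖u s‖ = c) : ⟪u t, u'⟫ = 0 := by
  have h := hu.norm_sq
  simp only [hc] at h
  have := h.unique (hasDerivAt_const t (c ^ 2))
  linarith

noncomputable def cross3 : ℝ³ →L[ℝ] ℝ³ →L[ℝ] ℝ³ :=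
  ((crossProduct.compl₁₂ (WithLp.linearEquiv 2 ℝ (Fin 3 → ℝ)).toLinearMap
      (WithLp.linearEquiv 2 ℝ (Fin 3 → ℝ)).toLinearMap).compr₂
    (WithLp.linearEquiv 2 ℝ (Fin 3 → ℝ)).symm.toLinearMap).toContinuousBilinearMap

local infixl:74 " ×₃ " => cross3

section CrossProduct

theorem cross3_apply (x y : ℝ³) : x ×₃ y = toLp 2 (crossProduct (ofLp x) (ofLp y)) := rfl

theorem real_inner_eq_dotProduct (x y : ℝ³) : ⟪x, y⟫ = ofLp x ⬝ᵥ ofLp y := by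
  rw [EuclideanSpace.inner_eq_star_dotProduct, star_trivial, dotProduct_comm]

theorem inner_self_cross3 (x y : ℝ³) : ⟪x, x ×₃ y⟫ = 0 := by
  rw [real_inner_eq_dotProduct, cross3_apply, ofLp_toLp, dot_self_cross]

theorem inner_cross3_self (x y : ℝ³) : ⟪y, x ×₃ y⟫ = 0 := by
  rw [real_inner_eq_dotProduct, cross3_apply, ofLp_toLp, dot_cross_self]

theorem cross3_self (x : ℝ³) : x ×₃ x = 0 := by
  rw [cross3_apply, cross_self, toLp_zero]

theorem cross3_cross3_eq_smul_sub_smul (x y z : ℝ³) :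
    (x ×₃ y) ×₃ z = ⟪x, z⟫ • y - ⟪y, z⟫ • x := by
  simp only [cross3_apply, cross_cross_eq_smul_sub_smul, real_inner_eq_dotProduct, toLp_sub,
    toLp_smul, toLp_ofLp]

theorem cross3_cross3_eq_smul_sub_smul' (x y z : ℝ³) :
    x ×₃ (y ×₃ z) = ⟪x, z⟫ • y - ⟪x, y⟫ • z := by
  simp only [cross3_apply, cross_cross_eq_smul_sub_smul', real_inner_eq_dotProduct,
    dotProduct_comm (ofLp y), toLp_sub, toLp_smul, toLp_ofLp]

theorem inner_cross3_cross3 (a b c d : ℝ³) :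
    ⟪a ×₃ b, c ×₃ d⟫ = ⟪a, c⟫ * ⟪b, d⟫ - ⟪a, d⟫ * ⟪b, c⟫ := by
  simp only [real_inner_eq_dotProduct, cross3_apply, cross_dot_cross]

theorem HasDerivAt.cross3 {u v : ℝ → ℝ³} {u' v' : ℝ³} {t : ℝ} (hu : HasDerivAt u u' t)
    (hv : HasDerivAt v v' t) :
    HasDerivAt (fun s => u s ×₃ v s) (u' ×₃ v t + u t ×₃ v') t :=
  (_root_.cross3.hasFDerivAt.comp_hasDerivAt t hu).clm_apply hv

theorem torsion3_eq (γ : ℝ → ℝ³) (t : ℝ) : torsion3 γ t =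
    ⟪deriv γ t ×₃ deriv (deriv γ) t, deriv (deriv (deriv γ)) t⟫ / ‖deriv (deriv γ) t‖ ^ 2 :=
  rfl

theorem continuous_torsion3 {γ : ℝ → ℝ³} (hγ : ContDiff ℝ 3 γ)
    (hκ : ∀ t, deriv (deriv γ) t ≠ 0) : Continuous (torsion3 γ) := by
  have h (k : ℕ) (hk : k ≤ 3) : Continuous (deriv^[k] γ) := by
    rw [← iteratedDeriv_eq_iterate]
    exact hγ.continuous_iteratedDeriv k (by exact_mod_cast hk)
  have h1 := h 1 (by norm_num)
  have h2 := h 2 (by norm_num)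
  have h3 := h 3 le_rfl
  simp only [Function.iterate_succ, Function.iterate_zero, Function.comp_apply, id] at h1 h2 h3
  simp_rw [funext (torsion3_eq γ)]
  exact ((cross3.continuous₂.comp₂ h1 h2).inner h3).div (h2.norm.pow 2)
    fun t => pow_ne_zero 2 (norm_ne_zero_iff.mpr (hκ t))

end CrossProduct

section DarbouxFrame

variable {T N : ℝ³} (hT : ‖T‖ = 1) (hN : ‖N‖ = 1) (hTN : ⟪T, N⟫ = 0)
include hT hN hTN

theorem inner_cross3_self_of_orthonormal : ⟪T ×₃ N, T ×₃ N⟫ = 1 := by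
  rw [inner_cross3_cross3, real_inner_self_eq_norm_sq, real_inner_self_eq_norm_sq, hT, hN,
    real_inner_comm T N, hTN]
  norm_num

theorem eq_smul_add_smul_cross3_of_inner_eq_zero {x : ℝ³} (hx : ⟪T, x⟫ = 0) :
    x = ⟪x, N⟫ • N + ⟪x, T ×₃ N⟫ • (T ×₃ N) := by
  set M := T ×₃ N
  have hxM : x ×₃ M = ⟪x, N⟫ • T := by
    rw [cross3_cross3_eq_smul_sub_smul', real_inner_comm T x, hx, zero_smul, sub_zero]
  have hMT : M ×₃ T = N := by
    rw [cross3_cross3_eq_smul_sub_smul, real_inner_self_eq_norm_sq, hT, real_inner_comm T N, hTN]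
    simp
  calc x = M ×₃ (x ×₃ M) + ⟪x, M⟫ • M := by
        rw [cross3_cross3_eq_smul_sub_smul', inner_cross3_self_of_orthonormal hT hN hTN,
          one_smul, real_inner_comm]
        abel
    _ = ⟪x, N⟫ • N + ⟪x, M⟫ • M := by rw [hxM, map_smul, hMT]

theorem norm_sq_eq_of_inner_eq_zero {x : ℝ³} (hx : ⟪T, x⟫ = 0) :
    ‖x‖ ^ 2 = ⟪x, N⟫ ^ 2 + ⟪x, T ×₃ N⟫ ^ 2 := by
  have hM : ‖T ×₃ N‖ = 1 := by
    rw [norm_eq_sqrt_real_inner, inner_cross3_self_of_orthonormal hT hN hTN, sqrt_one]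
  have hNM (a b : ℝ) : ⟪a • N, b • (T ×₃ N)⟫ = 0 := by
    rw [real_inner_smul_left, real_inner_smul_right, inner_cross3_self, mul_zero, mul_zero]
  set f := ⟪x, N⟫
  set g := ⟪x, T ×₃ N⟫
  rw [eq_smul_add_smul_cross3_of_inner_eq_zero hT hN hTN hx, sq,
    norm_add_sq_eq_norm_sq_add_norm_sq_real (hNM f g)]
  simp [norm_smul, hN, hM, sq]

theorem cross3_eq_of_inner_eq_zero {x : ℝ³} (hx : ⟪T, x⟫ = 0) :
    T ×₃ x = ⟪x, N⟫ • (T ×₃ N) - ⟪x, T ×₃ N⟫ • N := by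
  conv_lhs => rw [eq_smul_add_smul_cross3_of_inner_eq_zero hT hN hTN hx]
  rw [map_add, map_smul, map_smul, cross3_cross3_eq_smul_sub_smul', real_inner_self_eq_norm_sq,
    hT, hTN]
  module

end DarbouxFrame

-- Curvatures of a curve with unit tangent `T = γ'` on a surface with unit normal `N` along it.
noncomputable def normalCurvature (T N : ℝ → ℝ³) (t : ℝ) : ℝ := ⟪deriv T t, N t⟫

noncomputable def geodesicCurvature (T N : ℝ → ℝ³) (t : ℝ) : ℝ := ⟪deriv T t, T t ×₃ N t⟫

section LineOfCurvature

variable {T N : ℝ → ℝ³} {t c : ℝ}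

theorem hasDerivAt_normalCurvature (hT' : DifferentiableAt ℝ (deriv T) t)
    (hN : HasDerivAt N (c • T t) t) (hTT' : ⟪T t, deriv T t⟫ = 0) :
    HasDerivAt (normalCurvature T N) ⟪deriv (deriv T) t, N t⟫ t := by
  have h := hT'.hasDerivAt.inner ℝ hN
  rwa [real_inner_smul_right, real_inner_comm, hTT', mul_zero, zero_add] at h

theorem hasDerivAt_geodesicCurvature (hT : DifferentiableAt ℝ T t)
    (hT' : DifferentiableAt ℝ (deriv T) t) (hN : HasDerivAt N (c • T t) t) :
    HasDerivAt (geodesicCurvature T N) ⟪deriv (deriv T) t, T t ×₃ N t⟫ t := by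
  have h := hT'.hasDerivAt.inner ℝ (hT.hasDerivAt.cross3 hN)
  rwa [map_smul, cross3_self, smul_zero, add_zero, inner_self_cross3, zero_add] at h

theorem hasDerivAt_arctan_geodesicCurvature_div_normalCurvature
    (hT : DifferentiableAt ℝ T t) (hT' : DifferentiableAt ℝ (deriv T) t)
    (hTunit : ∀ s, ‖T s‖ = 1) (hN : HasDerivAt N (c • T t) t) (hNunit : ‖N t‖ = 1)
    (hNT : ⟪N t, T t⟫ = 0) (hκn : normalCurvature T N t ≠ 0) :
    HasDerivAt (fun s => arctan (geodesicCurvature T N s / normalCurvature T N s))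
      (⟪T t ×₃ deriv T t, deriv (deriv T) t⟫ / ‖deriv T t‖ ^ 2) t := by
  have hTT' : ⟪T t, deriv T t⟫ = 0 := inner_eq_zero_of_hasDerivAt_of_norm_eq hT.hasDerivAt hTunit
  have hTN : ⟪T t, N t⟫ = 0 := by rwa [real_inner_comm]
  convert HasDerivAt.arctan_div (hasDerivAt_normalCurvature hT' hN hTT')
    (hasDerivAt_geodesicCurvature hT hT' hN) hκn using 1
  rw [cross3_eq_of_inner_eq_zero (hTunit t) hNunit hTN hTT',
    norm_sq_eq_of_inner_eq_zero (hTunit t) hNunit hTN hTT', inner_sub_left, real_inner_smul_left,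
    real_inner_smul_left, real_inner_comm (deriv (deriv T) t) (T t ×₃ N t),
    real_inner_comm (deriv (deriv T) t) (N t)]
  rfl

end LineOfCurvature

theorem total_torsion_of_closed_line_of_curvature_convex_general
    (γ : ℝ → EuclideanSpace ℝ (Fin 3)) (ℓ : ℝ)
    (hsmooth : ContDiff ℝ (⊤ : ℕ∞) γ)
    (hunit : ∀ t, ‖deriv γ t‖ = 1)
    (hclosed : ∀ t, γ (t + ℓ) = γ t)
    (hcurv : ∀ t, ‖deriv (deriv γ) t‖ > 0)
    (N : ℝ → EuclideanSpace ℝ (Fin 3))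
    (hNsmooth : ContDiff ℝ (⊤ : ℕ∞) N)
    (hNclosed : ∀ t, N (t + ℓ) = N t)
    (hNunit : ∀ t, ‖N t‖ = 1)
    (hNorth : ∀ t, ⟪N t, deriv γ t⟫ = 0)
    (hRodrigues : ∀ t, ∃ c : ℝ, deriv N t = c • deriv γ t)
    (hconvex : ∀ t, ⟪deriv (deriv γ) t, N t⟫ > 0) :
    ∫ t in (0:ℝ)..ℓ, torsion3 γ t = 0 := by
  have hγ' : ContDiff ℝ ∞ (deriv γ) := hsmooth.iterate_deriv 1
  have hγ'' : ContDiff ℝ ∞ (deriv (deriv γ)) := hsmooth.iterate_deriv 2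
  have hγ'per : Periodic (deriv γ) ℓ := Periodic.deriv hclosed
  set θ := fun s => arctan (geodesicCurvature (deriv γ) N s / normalCurvature (deriv γ) N s)
  have hθ (t : ℝ) : HasDerivAt θ (torsion3 γ t) t := by
    obtain ⟨c, hc⟩ := hRodrigues t
    exact hasDerivAt_arctan_geodesicCurvature_div_normalCurvature
      (hγ'.differentiable (by simp) t) (hγ''.differentiable (by simp) t) hunit
      (hc ▸ (hNsmooth.differentiable (by simp) t).hasDerivAt) (hNunit t) (hNorth t)
      (hconvex t).ne'
  have hθper : Periodic θ ℓ := fun t => by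
    simp only [θ, geodesicCurvature, normalCurvature, hγ'per t, hγ'per.deriv t, hNclosed t]
  have hτ : Continuous (torsion3 γ) :=
    continuous_torsion3 (hsmooth.of_le (by norm_cast)) fun t => norm_pos_iff.mp (hcurv t)
  simpa using hθper.intervalIntegral_eq_zero_of_hasDerivAt 0 hθ (hτ.intervalIntegrable _ _)

/-- The total torsion of a closed line of curvature of a *convex* oriented surface
in `ℝ³` vanishes. -/
theorem total_torsion_of_closed_line_of_curvature_convex
    (γ : ℝ → EuclideanSpace ℝ (Fin 3)) (ℓ : ℝ) (hℓ : 0 < ℓ)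
    (hsmooth : ContDiff ℝ (⊤ : ℕ∞) γ)
    (hunit : ∀ t, ‖deriv γ t‖ = 1)
    (hclosed : ∀ t, γ (t + ℓ) = γ t)
    (hcurv : ∀ t, ‖deriv (deriv γ) t‖ > 0)
    (N : ℝ → EuclideanSpace ℝ (Fin 3))
    (hNsmooth : ContDiff ℝ (⊤ : ℕ∞) N)
    (hNclosed : ∀ t, N (t + ℓ) = N t)
    (hNunit : ∀ t, ‖N t‖ = 1)
    (hNorth : ∀ t, ⟪N t, deriv γ t⟫ = 0)
    (hRodrigues : ∀ t, ∃ c : ℝ, deriv N t = c • deriv γ t)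
    (hconvex : ∀ t, ⟪deriv (deriv γ) t, N t⟫ > 0) :
    ∫ t in (0:ℝ)..ℓ, torsion3 γ t = 0 :=
  total_torsion_of_closed_line_of_curvature_convex_general γ ℓ hsmooth hunit hclosed hcurv N
    hNsmooth hNclosed hNunit hNorth hRodrigues hconvex
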